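/- Let C ∈ ℂ, let p be a polynomial over ℂ of degree at most 2 and q a polynomial over ℂ of degree at most 4. Let F : ℂ → ℂ be smooth with F and ð̄₂F bounded on ℂ, and suppose that for every z ∈ ℂ: (ð₁(ð̄₂F))(z) + 5F(z) = (10·p(z)² − 15·C·q(z))·(1+|z|²)^(−2). Then for each k ∈ {0, 1, 2, 3, 4}: ∫_ℂ conj(Y_k(z))·F(z)·4(1+|z|²)^(−2) dλ(z) = (1/3)·∫_ℂ conj(Y_k(z))·(10·p(z)² − 15·C·q(z))·(1+|z|²)^(−2)·4(1+|z|²)^(−2) dλ(z). In particular, if 2·p(z)² = 3·C·q(z) for all z (the asymptotically algebraically special relation 2(Ψ₁⁰)² = 3Ψ₀⁰Ψ₂⁰), then all five integrals ∫ conj(Y_k)·F dS vanish. (This is the concrete content of the paper's final equation ðð̄Ψ₀¹ + 5Ψ₀¹ = 10(Ψ₁⁰)² − 15Ψ₀⁰Ψ₂⁰, with Ψ₁⁰ = p(z)/(1+|z|²), Ψ₀⁰ = q(z)/(1+|z|²)², Ψ₂⁰ = C, F = Ψ₀¹: under the asymptotically algebraically special condition all Newman–Penrose constants vanish.) -/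

import Mathlib

open Complex

/-- The Wirtinger derivative `∂_z f = (1/2)(∂ₓf − i∂_yf)` of `f : ℂ → ℂ`,
viewed as a real-differentiable function on `ℝ²`. -/
noncomputable def wirtD (f : ℂ → ℂ) (z : ℂ) : ℂ :=
  (1 / 2 : ℂ) * (fderiv ℝ f z 1 - Complex.I * fderiv ℝ f z Complex.I)

/-- The conjugate Wirtinger derivative `∂_z̄ f = (1/2)(∂ₓf + i∂_yf)`. -/
noncomputable def wirtDBar (f : ℂ → ℂ) (z : ℂ) : ℂ :=
  (1 / 2 : ℂ) * (fderiv ℝ f z 1 + Complex.I * fderiv ℝ f z Complex.I)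

/-- The spin-weight-`s` Newman–Penrose operator
`(ð_s f)(z) = 2^(−1/2) (1+|z|²)^(1−s) ∂_z̄[(1+|z|²)^s f](z)`. -/
noncomputable def edth (s : ℤ) (f : ℂ → ℂ) (z : ℂ) : ℂ :=
  (Real.sqrt 2 : ℂ)⁻¹ * (1 + ‖z‖ ^ 2 : ℂ) ^ (1 - s) *
    wirtDBar (fun w => (1 + ‖w‖ ^ 2 : ℂ) ^ s * f w) z

/-- The spin-weight-`s` Newman–Penrose operator
`(ð̄_s f)(z) = 2^(−1/2) (1+|z|²)^(1+s) ∂_z[(1+|z|²)^(−s) f](z)`. -/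
noncomputable def edthBar (s : ℤ) (f : ℂ → ℂ) (z : ℂ) : ℂ :=
  (Real.sqrt 2 : ℂ)⁻¹ * (1 + ‖z‖ ^ 2 : ℂ) ^ (1 + s) *
    wirtD (fun w => (1 + ‖w‖ ^ 2 : ℂ) ^ (-s) * f w) z

/-- The representative `Y_k(z) = z^k (1+|z|²)^(−2)` of the spin-weight-2,
`l = 2` spherical harmonic `₂Y_{2,k−2}` in the stereographic chart. -/
noncomputable def Ysph (k : ℕ) (z : ℂ) : ℂ :=
  z ^ k / (1 + ‖z‖ ^ 2 : ℂ) ^ 2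

/-! ### Auxiliary theory: real-linear maps `ℂ → ℂ` and Wirtinger calculus -/

open MeasureTheory Set Filter Topology

noncomputable def wd (a b : ℂ) : ℂ →L[ℝ] ℂ :=
  a • (ContinuousLinearMap.id ℝ ℂ) + b • (Complex.conjCLE.toContinuousLinearMap)

@[simp] lemma wd_apply (a b v : ℂ) : wd a b v = a * v + b * (starRingEnd ℂ) v := by
  simp [wd, Complex.conjCLE_apply, smul_eq_mul]

lemma clm_eq_wd (L : ℂ →L[ℝ] ℂ) :
    L = wd ((1/2) * (L 1 - Complex.I * L Complex.I))
           ((1/2) * (L 1 + Complex.I * L Complex.I)) := by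
  ext v
  obtain ⟨x, y⟩ := v
  have h3 : (⟨x, y⟩ : ℂ) = (x : ℂ) + (y : ℂ) * Complex.I := Complex.mk_eq_add_mul_I x y
  have h1 : L ⟨x, y⟩ = (x : ℝ) • L 1 + (y : ℝ) • L Complex.I := by
    rw [← _root_.map_smul, ← _root_.map_smul, ← map_add]
    congr 1
    rw [h3]; simp [Complex.real_smul]
  have h2 : (starRingEnd ℂ) (⟨x, y⟩ : ℂ) = (x : ℂ) - (y : ℂ) * Complex.I := by
    rw [h3]; simp [Complex.ext_iff]
  rw [h1, wd_apply, h2, h3]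
  simp only [smul_eq_mul, Complex.real_smul]
  ring_nf
  rw [Complex.I_sq]
  ring

def HW (f : ℂ → ℂ) (a b z : ℂ) : Prop := HasFDerivAt f (wd a b) z

lemma HW.wirtD_eq {f : ℂ → ℂ} {a b z : ℂ} (h : HW f a b z) : wirtD f z = a := by
  rw [wirtD, HasFDerivAt.fderiv h]
  simp [Complex.conj_I]
  ring_nf
  rw [Complex.I_sq]; ring

lemma HW.wirtDBar_eq {f : ℂ → ℂ} {a b z : ℂ} (h : HW f a b z) : wirtDBar f z = b := by
  rw [wirtDBar, HasFDerivAt.fderiv h]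
  simp [Complex.conj_I]
  ring_nf
  rw [Complex.I_sq]; ring

lemma HW.fderiv_eq {f : ℂ → ℂ} {a b z : ℂ} (h : HW f a b z) : fderiv ℝ f z = wd a b :=
  HasFDerivAt.fderiv h

lemma HW.differentiableAt {f : ℂ → ℂ} {a b z : ℂ} (h : HW f a b z) :
    DifferentiableAt ℝ f z := HasFDerivAt.differentiableAt h

lemma HW.of_eq {f : ℂ → ℂ} {a b z a' b' : ℂ} (h : HW f a b z) (ha : a = a') (hb : b = b') :
    HW f a' b' z := ha ▸ hb ▸ h

lemma wd_eq_zero : wd 0 0 = 0 := by ext v; simp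

lemma hw_const (c z : ℂ) : HW (fun _ => c) 0 0 z := by
  rw [HW, wd_eq_zero]; exact hasFDerivAt_const c z

lemma hw_id (z : ℂ) : HW (fun w => w) 1 0 z := by
  have h : wd 1 0 = ContinuousLinearMap.id ℝ ℂ := by ext v; simp
  rw [HW, h]; exact hasFDerivAt_id z

lemma hw_conj (z : ℂ) : HW (fun w => (starRingEnd ℂ) w) 0 1 z := by
  have h : wd 0 1 = Complex.conjCLE.toContinuousLinearMap := by
    ext v; simp [Complex.conjCLE_apply]
  rw [HW, h]
  exact Complex.conjCLE.toContinuousLinearMap.hasFDerivAt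

lemma HW.add {f g : ℂ → ℂ} {a b c d z : ℂ} (hf : HW f a b z) (hg : HW g c d z) :
    HW (fun w => f w + g w) (a + c) (b + d) z := by
  have h : wd (a + c) (b + d) = wd a b + wd c d := by ext v; simp; ring
  rw [HW, h]; exact HasFDerivAt.add hf hg

lemma HW.sub {f g : ℂ → ℂ} {a b c d z : ℂ} (hf : HW f a b z) (hg : HW g c d z) :
    HW (fun w => f w - g w) (a - c) (b - d) z := by
  have h : wd (a - c) (b - d) = wd a b - wd c d := by ext v; simp; ring
  rw [HW, h]; exact HasFDerivAt.sub hf hg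

lemma HW.mul {f g : ℂ → ℂ} {a b c d z : ℂ} (hf : HW f a b z) (hg : HW g c d z) :
    HW (fun w => f w * g w) (f z * c + g z * a) (f z * d + g z * b) z := by
  have h : wd (f z * c + g z * a) (f z * d + g z * b) = f z • wd c d + g z • wd a b := by
    ext v; simp [smul_eq_mul]; ring
  rw [HW, h]; exact HasFDerivAt.mul hf hg

lemma HW.inv {f : ℂ → ℂ} {a b z : ℂ} (hf : HW f a b z) (h0 : f z ≠ 0) :
    HW (fun w => (f w)⁻¹) (-(a / (f z) ^ 2)) (-(b / (f z) ^ 2)) z := by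
  have h := (hasFDerivAt_inv' (𝕜 := ℝ) h0).comp z hf
  have he : wd (-(a / (f z) ^ 2)) (-(b / (f z) ^ 2))
      = (-(ContinuousLinearMap.mulLeftRight ℝ ℂ (f z)⁻¹ (f z)⁻¹)).comp (wd a b) := by
    ext v
    simp [ContinuousLinearMap.comp_apply, ContinuousLinearMap.mulLeftRight_apply]
    field_simp
    ring
  rw [HW, he]; exact h

lemma HW.pow {f : ℂ → ℂ} {a b z : ℂ} (hf : HW f a b z) (n : ℕ) :
    HW (fun w => f w ^ n) ((n : ℂ) * f z ^ (n - 1) * a) ((n : ℂ) * f z ^ (n - 1) * b) z := by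
  induction n with
  | zero => simpa using hw_const 1 z
  | succ n ih =>
      have h := HW.mul hf ih
      have hfun : (fun w => f w * f w ^ n) = fun w => f w ^ (n + 1) := by
        funext w; rw [pow_succ]; ring
      rw [HW, hfun] at h
      have e : ∀ c : ℂ, f z * ((n : ℂ) * f z ^ (n - 1) * c) + f z ^ n * c
          = ((n + 1 : ℕ) : ℂ) * f z ^ (n + 1 - 1) * c := by
        intro c
        cases n with
        | zero => simp
        | succ m =>
            push_cast
            ring
      rw [e a, e b] at h
      exact h

lemma hw_of_diff {f : ℂ → ℂ} {z : ℂ} (hd : DifferentiableAt ℝ f z) :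
    HW f (wirtD f z) (wirtDBar f z) z := by
  rw [HW, wirtD, wirtDBar, ← clm_eq_wd]
  exact hd.hasFDerivAt

/-! ### Divergence theorem on `ℂ` -/

noncomputable def eL : ℝ × ℝ →L[ℝ] ℂ :=
  (ContinuousLinearMap.fst ℝ ℝ ℝ).smulRight 1 + (ContinuousLinearMap.snd ℝ ℝ ℝ).smulRight Complex.I

@[simp] lemma eL_apply (p : ℝ × ℝ) : eL p = (p.1 : ℂ) + (p.2 : ℂ) * Complex.I := by
  simp [eL, Complex.real_smul]

lemma abs_eL_sq (p : ℝ × ℝ) : ‖(eL p)‖ ^ 2 = p.1 ^ 2 + p.2 ^ 2 := by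
  rw [Complex.sq_norm, eL_apply]
  simp [Complex.normSq_apply]
  ring

lemma div_int_zero (f g D : ℂ → ℂ) (hf : Differentiable ℝ f) (hg : Differentiable ℝ g)
    (hD : ∀ z, fderiv ℝ f z 1 + fderiv ℝ g z Complex.I = D z)
    (hDint : Integrable D)
    (K : ℝ) (hK0 : 0 ≤ K)
    (hKf : ∀ z, ‖f z‖ ≤ K / (1 + ‖z‖ ^ 2))
    (hKg : ∀ z, ‖g z‖ ≤ K / (1 + ‖z‖ ^ 2)) :
    ∫ z, D z = 0 := by
  set m := Complex.measurableEquivRealProd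
  set sq : ℕ → Set ℂ := fun n => (m : ℂ → ℝ × ℝ) ⁻¹' Icc (-(n : ℝ), -(n : ℝ)) ((n : ℝ), (n : ℝ))
    with hsq
  have hmem : ∀ (n : ℕ) (z : ℂ), z ∈ sq n ↔
      ((-(n:ℝ) ≤ z.re ∧ z.re ≤ n) ∧ (-(n:ℝ) ≤ z.im ∧ z.im ≤ n)) := by
    intro n z
    simp only [hsq, mem_preimage, mem_Icc, Prod.le_def]
    exact ⟨fun ⟨h1, h2⟩ => ⟨⟨h1.1, h2.1⟩, ⟨h1.2, h2.2⟩⟩,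
      fun ⟨h1, h2⟩ => ⟨⟨h1.1, h2.1⟩, ⟨h1.2, h2.2⟩⟩⟩
  have hsqm : ∀ n, MeasurableSet (sq n) := fun n => m.measurable measurableSet_Icc
  have hsqmono : Monotone sq := by
    intro a b hab z hz
    rw [hmem] at hz ⊢
    have : (a : ℝ) ≤ b := by exact_mod_cast hab
    refine ⟨⟨by linarith [hz.1.1], by linarith [hz.1.2]⟩,
      ⟨by linarith [hz.2.1], by linarith [hz.2.2]⟩⟩
  have hsqU : (⋃ n, sq n) = univ := by
    ext z
    simp only [mem_iUnion, mem_univ, iff_true]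
    obtain ⟨n, hn⟩ := exists_nat_ge (max |z.re| |z.im|)
    refine ⟨n, (hmem n z).2 ?_⟩
    obtain ⟨h1, h2⟩ := abs_le.1 ((le_max_left _ _).trans hn)
    obtain ⟨h3, h4⟩ := abs_le.1 ((le_max_right _ _).trans hn)
    exact ⟨⟨h1, h2⟩, ⟨h3, h4⟩⟩
  have hIOn : IntegrableOn D (⋃ n, sq n) := by rw [hsqU]; exact hDint.integrableOn
  have hlim1 : Tendsto (fun n => ∫ z in sq n, D z) atTop (𝓝 (∫ z, D z)) := by
    have h := tendsto_setIntegral_of_monotone hsqm hsqmono hIOn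
    rwa [hsqU, setIntegral_univ] at h
  have key : ∀ n : ℕ, ∫ z in sq n, D z =
      (((∫ x in -(n:ℝ)..n, g (eL (x, (n:ℝ)))) - ∫ x in -(n:ℝ)..n, g (eL (x, -(n:ℝ)))) +
          ∫ y in -(n:ℝ)..n, f (eL ((n:ℝ), y))) - ∫ y in -(n:ℝ)..n, f (eL (-(n:ℝ), y)) := by
    intro n
    have hP : ∀ x : ℝ × ℝ, HasFDerivAt (fun p => f (eL p)) ((fderiv ℝ f (eL x)).comp eL) x :=
      fun x => (hf (eL x)).hasFDerivAt.comp x eL.hasFDerivAt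
    have hQ : ∀ x : ℝ × ℝ, HasFDerivAt (fun p => g (eL p)) ((fderiv ℝ g (eL x)).comp eL) x :=
      fun x => (hg (eL x)).hasFDerivAt.comp x eL.hasFDerivAt
    have hdiv : (fun x : ℝ × ℝ => ((fderiv ℝ f (eL x)).comp eL) (1, 0)
        + ((fderiv ℝ g (eL x)).comp eL) (0, 1)) = fun x : ℝ × ℝ => D (eL x) := by
      funext x
      have e1 : eL ((1 : ℝ), (0 : ℝ)) = 1 := by simp
      have e2 : eL ((0 : ℝ), (1 : ℝ)) = Complex.I := by simp
      simp only [ContinuousLinearMap.comp_apply, e1, e2]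
      exact hD (eL x)
    have heLsymm : ∀ p : ℝ × ℝ, eL p = (m.symm : ℝ × ℝ → ℂ) p := by
      intro p
      rw [eL_apply, Complex.measurableEquivRealProd_symm_apply]
      exact (Complex.mk_eq_add_mul_I _ _).symm
    have hDe : Integrable (fun x : ℝ × ℝ => D (eL x)) := by
      have hmp : MeasurePreserving (m.symm : ℝ × ℝ → ℂ) :=
        Complex.volume_preserving_equiv_real_prod.symm m
      have h2 : (fun x : ℝ × ℝ => D (eL x)) = D ∘ (m.symm : ℝ × ℝ → ℂ) := by
        funext p; simp only [Function.comp_apply, heLsymm p]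
      rw [h2, ← hmp.integrable_comp_emb m.symm.measurableEmbedding] at *
      exact hDint
    have hle : ((-(n:ℝ), -(n:ℝ)) : ℝ × ℝ) ≤ ((n:ℝ), (n:ℝ)) := by
      rw [Prod.le_def]
      constructor <;> simp
    have hthm := integral_divergence_prod_Icc_of_hasFDerivAt_off_countable_of_le
      (fun p => f (eL p)) (fun p => g (eL p))
      (fun x => (fderiv ℝ f (eL x)).comp eL) (fun x => (fderiv ℝ g (eL x)).comp eL)
      (-(n:ℝ), -(n:ℝ)) ((n:ℝ), (n:ℝ)) hle ∅ countable_empty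
      ((hf.continuous.comp eL.continuous).continuousOn)
      ((hg.continuous.comp eL.continuous).continuousOn)
      (fun x _ => hP x) (fun x _ => hQ x)
      (by rw [show (fun x : ℝ × ℝ => ((fderiv ℝ f (eL x)).comp eL) (1, 0)
            + ((fderiv ℝ g (eL x)).comp eL) (0, 1)) = fun x : ℝ × ℝ => D (eL x) from hdiv]
          exact hDe.integrableOn)
    rw [hdiv] at hthm
    rw [← hthm]
    have hpre := Complex.volume_preserving_equiv_real_prod.setIntegral_preimage_emb
      m.measurableEmbedding (fun x => D (eL x))
      (Icc ((-(n:ℝ), -(n:ℝ)) : ℝ × ℝ) ((n:ℝ), (n:ℝ)))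
    rw [← hpre]
    apply setIntegral_congr_fun (hsqm n)
    intro z _
    congr 1
    rw [heLsymm]
    exact Complex.ext rfl rfl
  have hbound : ∀ n : ℕ, ‖(((∫ x in -(n:ℝ)..n, g (eL (x, (n:ℝ))))
      - ∫ x in -(n:ℝ)..n, g (eL (x, -(n:ℝ)))) +
      ∫ y in -(n:ℝ)..n, f (eL ((n:ℝ), y))) - ∫ y in -(n:ℝ)..n, f (eL (-(n:ℝ), y))‖
      ≤ 4 * (K / (1 + (n:ℝ)^2) * |(n:ℝ) - (-(n:ℝ))|) := by
    intro n
    have hedge : ∀ (h : ℂ → ℂ), (∀ z, ‖h z‖ ≤ K / (1 + ‖z‖ ^ 2)) →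
        ∀ (p : ℝ × ℝ), p.1 ^ 2 = (n:ℝ)^2 ∨ p.2 ^ 2 = (n:ℝ)^2 →
          ‖h (eL p)‖ ≤ K / (1 + (n:ℝ)^2) := by
      intro h hh p hp
      refine (hh _).trans ?_
      apply div_le_div_of_nonneg_left hK0 (by positivity)
      rw [abs_eL_sq]
      rcases hp with hp | hp <;> nlinarith [sq_nonneg p.1, sq_nonneg p.2]
    have hn2 : (-(n:ℝ)) ^ 2 = (n:ℝ) ^ 2 := by ring
    have e1 := intervalIntegral.norm_integral_le_of_norm_le_const
      (C := K / (1 + (n:ℝ)^2)) (f := fun x => g (eL (x, (n:ℝ))))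
      (a := -(n:ℝ)) (b := (n:ℝ)) (fun x _ => hedge g hKg (x, (n:ℝ)) (Or.inr rfl))
    have e2 := intervalIntegral.norm_integral_le_of_norm_le_const
      (C := K / (1 + (n:ℝ)^2)) (f := fun x => g (eL (x, -(n:ℝ))))
      (a := -(n:ℝ)) (b := (n:ℝ)) (fun x _ => hedge g hKg (x, -(n:ℝ)) (Or.inr hn2))
    have e3 := intervalIntegral.norm_integral_le_of_norm_le_const
      (C := K / (1 + (n:ℝ)^2)) (f := fun y => f (eL ((n:ℝ), y)))
      (a := -(n:ℝ)) (b := (n:ℝ)) (fun y _ => hedge f hKf ((n:ℝ), y) (Or.inl rfl))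
    have e4 := intervalIntegral.norm_integral_le_of_norm_le_const
      (C := K / (1 + (n:ℝ)^2)) (f := fun y => f (eL (-(n:ℝ), y)))
      (a := -(n:ℝ)) (b := (n:ℝ)) (fun y _ => hedge f hKf (-(n:ℝ), y) (Or.inl hn2))
    have t1 := norm_sub_le ((((∫ x in -(n:ℝ)..n, g (eL (x, (n:ℝ)))))
      - ∫ x in -(n:ℝ)..n, g (eL (x, -(n:ℝ)))) + ∫ y in -(n:ℝ)..n, f (eL ((n:ℝ), y)))
      (∫ y in -(n:ℝ)..n, f (eL (-(n:ℝ), y)))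
    have t2 := norm_add_le ((∫ x in -(n:ℝ)..n, g (eL (x, (n:ℝ))))
      - ∫ x in -(n:ℝ)..n, g (eL (x, -(n:ℝ)))) (∫ y in -(n:ℝ)..n, f (eL ((n:ℝ), y)))
    have t3 := norm_sub_le (∫ x in -(n:ℝ)..n, g (eL (x, (n:ℝ))))
      (∫ x in -(n:ℝ)..n, g (eL (x, -(n:ℝ))))
    linarith
  have hbz : Tendsto (fun n : ℕ => 4 * (K / (1 + (n:ℝ)^2) * |(n:ℝ) - (-(n:ℝ))|)) atTop (𝓝 0) := by
    have heq : ∀ n : ℕ, 4 * (K / (1 + (n:ℝ)^2) * |(n:ℝ) - (-(n:ℝ))|)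
        = 8 * K * ((n:ℝ) / (1 + (n:ℝ)^2)) := by
      intro n
      have h1 : (n:ℝ) - (-(n:ℝ)) = 2 * n := by ring
      rw [h1, _root_.abs_of_nonneg (by positivity : (0:ℝ) ≤ 2 * (n:ℝ))]
      ring
    have h0 : Tendsto (fun n : ℕ => (n:ℝ) / (1 + (n:ℝ)^2)) atTop (𝓝 0) := by
      apply squeeze_zero (fun n => by positivity) (g := fun n : ℕ => 1 / (n:ℝ))
      · intro n
        rcases Nat.eq_zero_or_pos n with h | h
        · simp [h]
        · rw [div_le_div_iff₀ (by positivity) (by exact_mod_cast h)]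
          nlinarith [sq_nonneg ((n:ℝ) - 1), (Nat.one_le_cast (α := ℝ)).2 h]
      · exact tendsto_one_div_atTop_nhds_zero_nat
    simp only [heq]
    simpa using h0.const_mul (8 * K)
  have hlim2 : Tendsto (fun n => ∫ z in sq n, D z) atTop (𝓝 0) := by
    simp only [key]
    exact squeeze_zero_norm hbound hbz
  exact tendsto_nhds_unique hlim1 hlim2

/-! ### Smoothness, casts, bounds, integrability -/

lemma contDiff_wirtD_aux {f : ℂ → ℂ} (hf : ContDiff ℝ (⊤ : ℕ∞) f) (v : ℂ) :
    ContDiff ℝ (⊤ : ℕ∞) (fun z => fderiv ℝ f z v) :=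
  (hf.fderiv_right (m := (⊤ : ℕ∞)) (by simp)).clm_apply contDiff_const

lemma contDiff_wirtD {f : ℂ → ℂ} (hf : ContDiff ℝ (⊤ : ℕ∞) f) : ContDiff ℝ (⊤ : ℕ∞) (wirtD f) :=
  contDiff_const.mul ((contDiff_wirtD_aux hf 1).sub
    (contDiff_const.mul (contDiff_wirtD_aux hf Complex.I)))

lemma pow_le_aux {t : ℝ} (ht : 0 ≤ t) {k : ℕ} (hk : k ≤ 4) : t ^ k ≤ (1 + t ^ 2) ^ 2 := by
  rcases le_total t 1 with h | h
  · calc t ^ k ≤ 1 := pow_le_one₀ ht h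
      _ ≤ (1 + t ^ 2) ^ 2 := by nlinarith [sq_nonneg t]
  · calc t ^ k ≤ t ^ 4 := pow_le_pow_right₀ h hk
      _ ≤ (1 + t ^ 2) ^ 2 := by nlinarith [sq_nonneg t]

noncomputable def Wf (z : ℂ) : ℂ := 1 + z * (starRingEnd ℂ) z

lemma wcast' (z : ℂ) : (1 + (‖z‖) ^ 2 : ℂ) = Wf z := by
  rw [Wf, Complex.mul_conj, ← Complex.sq_norm]
  push_cast
  ring

lemma cast_w (z : ℂ) : (1 + (‖z‖) ^ 2 : ℂ) = ((1 + (‖z‖) ^ 2 : ℝ) : ℂ) := by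
  push_cast; ring

lemma wne (z : ℂ) : (1 + (‖z‖) ^ 2 : ℂ) ≠ 0 := by
  rw [cast_w, Complex.ofReal_ne_zero]
  positivity

lemma wfne (z : ℂ) : Wf z ≠ 0 := by rw [← wcast']; exact wne z

lemma abs_w (z : ℂ) : ‖(1 + (‖z‖) ^ 2 : ℂ)‖ = 1 + ‖z‖ ^ 2 := by
  rw [cast_w, Complex.norm_of_nonneg (by positivity)]

lemma absW (z : ℂ) : ‖(Wf z)‖ = 1 + ‖z‖ ^ 2 := by
  rw [← wcast']; exact abs_w z

lemma poly_bound (r : Polynomial ℂ) (hr : r.natDegree ≤ 4) :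
    ∃ c : ℝ, 0 ≤ c ∧ ∀ z : ℂ, ‖(r.eval z)‖ ≤ c * (1 + ‖z‖ ^ 2) ^ 2 := by
  refine ⟨∑ i ∈ Finset.range 5, ‖(r.coeff i)‖, by positivity, fun z => ?_⟩
  rw [Polynomial.eval_eq_sum_range' (n := 5) (lt_of_le_of_lt hr (by norm_num))]
  rw [Finset.sum_mul]
  calc ‖∑ i ∈ Finset.range 5, r.coeff i * z ^ i‖
      ≤ ∑ i ∈ Finset.range 5, ‖r.coeff i * z ^ i‖ := norm_sum_le _ _
    _ ≤ ∑ i ∈ Finset.range 5, ‖r.coeff i‖ * (1 + ‖z‖ ^ 2) ^ 2 := by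
        apply Finset.sum_le_sum
        intro i hi
        rw [norm_mul, norm_pow]
        apply mul_le_mul_of_nonneg_left _ (norm_nonneg _)
        exact pow_le_aux (norm_nonneg z) (Nat.lt_succ_iff.mp (Finset.mem_range.1 hi))
    _ = _ := rfl

lemma int_aux (k : ℕ) (hk : k ≤ 4) (h : ℂ → ℂ) (hc : Continuous h) (M : ℝ)
    (hM : ∀ z, ‖(h z)‖ ≤ M) :
    Integrable (fun z : ℂ => (starRingEnd ℂ) (Ysph k z) * h z
      * (4 / (1 + (‖z‖) ^ 2 : ℂ) ^ 2)) := by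
  have hM0 : 0 ≤ M := le_trans (norm_nonneg _) (hM 0)
  have hwc : Continuous (fun z : ℂ => (1 + (‖z‖) ^ 2 : ℂ)) := by
    continuity
  have hcont : Continuous (fun z : ℂ => (starRingEnd ℂ) (Ysph k z) * h z
      * (4 / (1 + (‖z‖) ^ 2 : ℂ) ^ 2)) := by
    apply Continuous.mul
    apply Continuous.mul
    · exact Complex.continuous_conj.comp ((continuous_pow k).div (hwc.pow 2)
        (fun z => pow_ne_zero 2 (wne z)))
    · exact hc
    · exact (continuous_const.div (hwc.pow 2) (fun z => pow_ne_zero 2 (wne z)))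
  have hint : Integrable (fun x : ℂ => ((1:ℝ) + ‖x‖ ^ 2) ^ ((-4 : ℝ) / 2)) :=
    integrable_rpow_neg_one_add_norm_sq (μ := volume) (E := ℂ) (by simp; norm_num)
  refine (hint.const_mul (4 * M)).mono' hcont.aestronglyMeasurable
    (Eventually.of_forall fun z => ?_)
  have ht : (0:ℝ) ≤ ‖z‖ := norm_nonneg z
  have hpos : (0:ℝ) < (1 + ‖z‖ ^ 2) ^ 2 := by positivity
  have hrw : ((1:ℝ) + ‖z‖ ^ 2) ^ ((-4 : ℝ) / 2) = ((1 + ‖z‖ ^ 2) ^ 2)⁻¹ := by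
    rw [show ((-4:ℝ)/2) = -(2:ℝ) by norm_num, Real.rpow_neg (by positivity)]
    congr 1
    rw [show ((2:ℝ)) = ((2:ℕ):ℝ) by norm_num, Real.rpow_natCast]
  rw [hrw]
  have habs : ‖(starRingEnd ℂ) (Ysph k z) * h z * (4 / (1 + (‖z‖) ^ 2 : ℂ) ^ 2)‖
      = ‖z‖ ^ k / (1 + ‖z‖ ^ 2) ^ 2 * ‖(h z)‖
        * (4 / (1 + ‖z‖ ^ 2) ^ 2) := by
    rw [show ∀ w : ℂ, ‖w‖ = ‖w‖ from fun _ => rfl]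
    rw [norm_mul, norm_mul, Complex.norm_conj]
    unfold Ysph
    rw [norm_div, norm_div, norm_pow, norm_pow, abs_w]
    congr 2
    simp
  rw [habs]
  have h1 : ‖z‖ ^ k / (1 + ‖z‖ ^ 2) ^ 2 ≤ 1 := by
    rw [div_le_one hpos]
    exact pow_le_aux ht hk
  have h2 : ‖(h z)‖ ≤ M := hM z
  calc ‖z‖ ^ k / (1 + ‖z‖ ^ 2) ^ 2 * ‖(h z)‖
        * (4 / (1 + ‖z‖ ^ 2) ^ 2)
      ≤ 1 * M * (4 / (1 + ‖z‖ ^ 2) ^ 2) := by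
        apply mul_le_mul_of_nonneg_right _ (by positivity)
        exact mul_le_mul h1 h2 (norm_nonneg _) (by norm_num)
    _ = 4 * M * ((1 + ‖z‖ ^ 2) ^ 2)⁻¹ := by
        rw [div_eq_mul_inv]; ring

/-! ### The concrete functions -/

lemma hwW (z : ℂ) : HW Wf ((starRingEnd ℂ) z) z z :=
  ((hw_const 1 z).add ((hw_id z).mul (hw_conj z))).of_eq (by ring) (by ring)

noncomputable def Gt (F : ℂ → ℂ) (z : ℂ) : ℂ :=
  Wf z * wirtD F z - 2 * ((starRingEnd ℂ) z * F z)

noncomputable def aGt (F : ℂ → ℂ) (z : ℂ) : ℂ :=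
  Wf z * wirtD (wirtD F) z - (starRingEnd ℂ) z * wirtD F z

noncomputable def bGt (F : ℂ → ℂ) (z : ℂ) : ℂ :=
  z * wirtD F z + Wf z * wirtDBar (wirtD F) z - 2 * F z - 2 * ((starRingEnd ℂ) z * wirtDBar F z)

lemma hwGt {F : ℂ → ℂ} (hF : ContDiff ℝ (⊤ : ℕ∞) F) (z : ℂ) : HW (Gt F) (aGt F z) (bGt F z) z := by
  have h1 : DifferentiableAt ℝ F z := (hF.differentiable (by simp)).differentiableAt
  have h2 : DifferentiableAt ℝ (wirtD F) z :=
    ((contDiff_wirtD hF).differentiable (by simp)).differentiableAt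
  exact (((hwW z).mul (hw_of_diff h2)).sub
    ((hw_const 2 z).mul ((hw_conj z).mul (hw_of_diff h1)))).of_eq
    (by unfold aGt; ring) (by unfold bGt; ring)

lemma hGt {F : ℂ → ℂ} (hF : ContDiff ℝ (⊤ : ℕ∞) F) (z : ℂ) :
    edthBar 2 F z = (Real.sqrt 2 : ℂ)⁻¹ * Gt F z := by
  rw [edthBar]
  have h1 : DifferentiableAt ℝ F z := (hF.differentiable (by simp)).differentiableAt
  have hfun : (fun w => (1 + (‖w‖) ^ 2 : ℂ) ^ (-(2:ℤ)) * F w)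
      = fun w => ((Wf w) ^ 2)⁻¹ * F w := by
    funext w
    rw [wcast', zpow_neg, show ((2:ℤ)) = ((2:ℕ):ℤ) from rfl, zpow_natCast]
  rw [hfun]
  have hin := (((hwW z).pow 2).inv (pow_ne_zero 2 (wfne z))).mul (hw_of_diff h1)
  have h2 := HW.wirtD_eq (f := fun w => ((Wf w) ^ 2)⁻¹ * F w) hin
  rw [h2, wcast', show ((1:ℤ) + 2) = ((3:ℕ):ℤ) from rfl, zpow_natCast]
  unfold Gt
  field_simp [wfne z]
  ring

noncomputable def Af (k : ℕ) (F : ℂ → ℂ) (z : ℂ) : ℂ :=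
  ((starRingEnd ℂ) z) ^ k * ((Wf z) ^ 3)⁻¹ * Gt F z

noncomputable def Bf (k : ℕ) (F : ℂ → ℂ) (z : ℂ) : ℂ :=
  (k : ℂ) * ((starRingEnd ℂ) z) ^ (k - 1) * (((Wf z) ^ 2)⁻¹ * F z)
    - 4 * (z * (((starRingEnd ℂ) z) ^ k * (((Wf z) ^ 3)⁻¹ * F z)))

noncomputable def aAf (k : ℕ) (F : ℂ → ℂ) (z : ℂ) : ℂ :=
  ((starRingEnd ℂ) z) ^ k * (((Wf z) ^ 3)⁻¹ * aGt F z
    - 3 * (starRingEnd ℂ) z * (((Wf z) ^ 4)⁻¹ * Gt F z))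

noncomputable def bAf (k : ℕ) (F : ℂ → ℂ) (z : ℂ) : ℂ :=
  (k : ℂ) * ((starRingEnd ℂ) z) ^ (k - 1) * (((Wf z) ^ 3)⁻¹ * Gt F z)
    + ((starRingEnd ℂ) z) ^ k * (((Wf z) ^ 3)⁻¹ * bGt F z
        - 3 * z * (((Wf z) ^ 4)⁻¹ * Gt F z))

noncomputable def aBf (k : ℕ) (F : ℂ → ℂ) (z : ℂ) : ℂ :=
  (k : ℂ) * ((starRingEnd ℂ) z) ^ (k - 1) * (((Wf z) ^ 2)⁻¹ * wirtD F z
      - 2 * (starRingEnd ℂ) z * (((Wf z) ^ 3)⁻¹ * F z))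
    - 4 * (((starRingEnd ℂ) z) ^ k * (((Wf z) ^ 3)⁻¹ * F z)
      + z * (((starRingEnd ℂ) z) ^ k * (((Wf z) ^ 3)⁻¹ * wirtD F z
        - 3 * (starRingEnd ℂ) z * (((Wf z) ^ 4)⁻¹ * F z))))

noncomputable def bBf (k : ℕ) (F : ℂ → ℂ) (z : ℂ) : ℂ :=
  (k : ℂ) * ((k - 1 : ℕ) : ℂ) * ((starRingEnd ℂ) z) ^ (k - 1 - 1) * (((Wf z) ^ 2)⁻¹ * F z)
    + (k : ℂ) * ((starRingEnd ℂ) z) ^ (k - 1) * (((Wf z) ^ 2)⁻¹ * wirtDBar F z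
      - 2 * z * (((Wf z) ^ 3)⁻¹ * F z))
    - 4 * (z * ((k : ℂ) * ((starRingEnd ℂ) z) ^ (k - 1) * (((Wf z) ^ 3)⁻¹ * F z)
      + ((starRingEnd ℂ) z) ^ k * (((Wf z) ^ 3)⁻¹ * wirtDBar F z
        - 3 * z * (((Wf z) ^ 4)⁻¹ * F z))))

set_option maxHeartbeats 1000000 in
lemma hwA {F : ℂ → ℂ} (hF : ContDiff ℝ (⊤ : ℕ∞) F) (k : ℕ) (z : ℂ) :
    HW (Af k F) (aAf k F z) (bAf k F z) z := by
  have h := (((hw_conj z).pow k).mul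
      (((hwW z).pow 3).inv (pow_ne_zero 3 (wfne z)))).mul (hwGt hF z)
  refine h.of_eq ?_ ?_
  · unfold aAf
    push_cast
    field_simp [wfne z]
    ring
  · unfold bAf
    push_cast
    field_simp [wfne z]
    ring

set_option maxHeartbeats 1000000 in
lemma hwB {F : ℂ → ℂ} (hF : ContDiff ℝ (⊤ : ℕ∞) F) (k : ℕ) (z : ℂ) :
    HW (Bf k F) (aBf k F z) (bBf k F z) z := by
  have h1 : DifferentiableAt ℝ F z := (hF.differentiable (by simp)).differentiableAt
  have hT1 := ((hw_const (k : ℂ) z).mul ((hw_conj z).pow (k - 1))).mul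
      ((((hwW z).pow 2).inv (pow_ne_zero 2 (wfne z))).mul (hw_of_diff h1))
  have hT2 := (hw_const 4 z).mul ((hw_id z).mul (((hw_conj z).pow k).mul
      ((((hwW z).pow 3).inv (pow_ne_zero 3 (wfne z))).mul (hw_of_diff h1))))
  refine (hT1.sub hT2).of_eq ?_ ?_
  · unfold aBf
    push_cast
    field_simp [wfne z]
    ring
  · unfold bBf
    push_cast
    field_simp [wfne z]
    ring

lemma Isum (u v uu vv s : ℂ) :
    (u - v) * 1 + (uu - vv) * 1 + ((Complex.I * (u + v) + s * 0) * Complex.I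
      + (Complex.I * (uu + vv) + s * 0) * (-Complex.I)) = 2 * uu - 2 * v := by
  linear_combination (u + v - uu - vv) * Complex.I_sq

lemma hYconj (k : ℕ) (z : ℂ) :
    (starRingEnd ℂ) (Ysph k z) = ((starRingEnd ℂ) z) ^ k / (Wf z) ^ 2 := by
  unfold Ysph
  have hcw : (starRingEnd ℂ) (1 + (‖z‖) ^ 2 : ℂ) = (1 + (‖z‖) ^ 2 : ℂ) := by
    rw [cast_w, Complex.conj_ofReal]
  rw [map_div₀, map_pow, map_pow, hcw, wcast']

/-! ### Norm bounds for the boundary terms -/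

lemma Af_bound {F : ℂ → ℂ} (k : ℕ) (hk : k ≤ 4) (N : ℝ)
    (hN : ∀ z, ‖(Gt F z)‖ ≤ N) (z : ℂ) :
    ‖Af k F z‖ ≤ N / (1 + ‖z‖ ^ 2) := by
  have ht : (0:ℝ) ≤ ‖z‖ := norm_nonneg z
  have hN0 : 0 ≤ N := le_trans (norm_nonneg _) (hN 0)
  have hpos : (0:ℝ) < 1 + ‖z‖ ^ 2 := by positivity
  have habs : ‖Af k F z‖ = ‖z‖ ^ k * ((1 + ‖z‖ ^ 2) ^ 3)⁻¹
      * ‖(Gt F z)‖ := by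
    rw [show ‖Af k F z‖ = ‖(Af k F z)‖ from rfl]
    unfold Af
    rw [norm_mul, norm_mul, norm_inv, norm_pow, norm_pow, Complex.norm_conj, absW]
  rw [habs]
  have h1 : ‖z‖ ^ k / (1 + ‖z‖ ^ 2) ^ 2 ≤ 1 := by
    rw [div_le_one (by positivity)]
    exact pow_le_aux ht hk
  calc ‖z‖ ^ k * ((1 + ‖z‖ ^ 2) ^ 3)⁻¹ * ‖(Gt F z)‖
      ≤ ‖z‖ ^ k * ((1 + ‖z‖ ^ 2) ^ 3)⁻¹ * N := by
        apply mul_le_mul_of_nonneg_left (hN z) (by positivity)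
    _ = (‖z‖ ^ k / (1 + ‖z‖ ^ 2) ^ 2) * (N / (1 + ‖z‖ ^ 2)) := by
        rw [pow_succ]
        field_simp
    _ ≤ 1 * (N / (1 + ‖z‖ ^ 2)) := by
        apply mul_le_mul_of_nonneg_right h1 (by positivity)
    _ = N / (1 + ‖z‖ ^ 2) := one_mul _

lemma Bf_bound {F : ℂ → ℂ} (k : ℕ) (hk : k ≤ 4) (N : ℝ)
    (hN : ∀ z, ‖(F z)‖ ≤ N) (z : ℂ) :
    ‖Bf k F z‖ ≤ 32 * N / (1 + ‖z‖ ^ 2) := by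
  have ht : (0:ℝ) ≤ ‖z‖ := norm_nonneg z
  have hN0 : 0 ≤ N := le_trans (norm_nonneg _) (hN 0)
  have hpos : (0:ℝ) < 1 + ‖z‖ ^ 2 := by positivity
  set t := ‖z‖ with htdef
  by_cases hk4 : k = 4
  · subst hk4
    have hBeq : Bf 4 F z = 4 * (((starRingEnd ℂ) z) ^ 3 * (((Wf z) ^ 3)⁻¹ * F z)) := by
      unfold Bf
      push_cast
      field_simp [wfne z]
      rw [show Wf z = 1 + z * (starRingEnd ℂ) z from rfl]
      ring
    rw [show ‖Bf 4 F z‖ = ‖(Bf 4 F z)‖ from rfl, hBeq]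
    rw [norm_mul, norm_mul, norm_mul, norm_inv, norm_pow, norm_pow, Complex.norm_conj, absW]
    have h4 : ‖(4:ℂ)‖ = 4 := by norm_num
    rw [h4]
    have hF := hN z
    have hcube : t ^ 3 ≤ (1 + t ^ 2) ^ 2 := pow_le_aux ht (by norm_num)
    calc 4 * (t ^ 3 * (((1 + t ^ 2) ^ 3)⁻¹ * ‖(F z)‖))
        ≤ 4 * ((1 + t ^ 2) ^ 2 * (((1 + t ^ 2) ^ 3)⁻¹ * N)) := by
          gcongr
    _ = 4 * N / (1 + t ^ 2) := by
          rw [pow_succ]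
          field_simp
    _ ≤ 32 * N / (1 + t ^ 2) := by gcongr; nlinarith
  · -- k ≤ 3 : crude triangle bound
    have hk3 : k ≤ 3 := by omega
    have htri : ‖Bf k F z‖ ≤ (k:ℝ) * t ^ (k-1) * (((1 + t ^ 2) ^ 2)⁻¹ * ‖(F z)‖)
        + 4 * (t * (t ^ k * (((1 + t ^ 2) ^ 3)⁻¹ * ‖(F z)‖))) := by
      unfold Bf
      refine le_trans (norm_sub_le _ _) ?_
      apply add_le_add
      · rw [show ∀ w : ℂ, ‖w‖ = ‖w‖ from fun _ => rfl]
        rw [norm_mul, norm_mul, norm_mul, norm_inv, norm_pow, norm_pow, Complex.norm_conj,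
          absW, Complex.norm_natCast]
      · rw [show ∀ w : ℂ, ‖w‖ = ‖w‖ from fun _ => rfl]
        rw [norm_mul, norm_mul, norm_mul, norm_mul, norm_inv, norm_pow, norm_pow,
          Complex.norm_conj, absW]
        have h4 : ‖(4:ℂ)‖ = 4 := by norm_num
        rw [h4]
    refine le_trans htri ?_
    have hb1 : (k:ℝ) * t ^ (k-1) * (((1 + t ^ 2) ^ 2)⁻¹ * ‖(F z)‖)
        ≤ 16 * N / (1 + t ^ 2) := by
      have htk : t ^ (k-1) ≤ 1 + t ^ 2 := by
        have : k - 1 ≤ 2 := by omega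
        calc t ^ (k-1) ≤ (1 + t^2)^2 / (1+t^2) := by
              rw [le_div_iff₀ hpos]
              rcases le_total t 1 with h | h
              · nlinarith [pow_le_one₀ ht h (n := k-1)]
              · have := pow_le_pow_right₀ h this
                nlinarith [this, sq_nonneg t]
          _ = 1 + t ^ 2 := by field_simp
      have hkr : (k:ℝ) ≤ 4 := by exact_mod_cast le_trans hk3 (by norm_num)
      have hF := hN z
      calc (k:ℝ) * t ^ (k-1) * (((1 + t ^ 2) ^ 2)⁻¹ * ‖(F z)‖)
          ≤ 4 * (1 + t^2) * (((1 + t ^ 2) ^ 2)⁻¹ * N) := by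
            apply mul_le_mul
            · apply mul_le_mul hkr htk (by positivity) (by norm_num)
            · exact mul_le_mul_of_nonneg_left hF (by positivity)
            · positivity
            · positivity
        _ = 4 * N / (1 + t ^ 2) := by field_simp
        _ ≤ 16 * N / (1 + t ^ 2) := by gcongr; nlinarith
    have hb2 : 4 * (t * (t ^ k * (((1 + t ^ 2) ^ 3)⁻¹ * ‖(F z)‖)))
        ≤ 16 * N / (1 + t ^ 2) := by
      have htk : t * t ^ k = t ^ (k+1) := by rw [pow_succ]; ring
      have hp : t ^ (k+1) ≤ (1 + t ^ 2) ^ 2 := pow_le_aux ht (by omega)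
      have hF := hN z
      calc 4 * (t * (t ^ k * (((1 + t ^ 2) ^ 3)⁻¹ * ‖(F z)‖)))
          = 4 * t ^ (k+1) * (((1 + t ^ 2) ^ 3)⁻¹ * ‖(F z)‖) := by
            rw [← htk]; ring
        _ ≤ 4 * (1 + t ^ 2) ^ 2 * (((1 + t ^ 2) ^ 3)⁻¹ * N) := by
            apply mul_le_mul
            · apply mul_le_mul_of_nonneg_left hp (by norm_num)
            · exact mul_le_mul_of_nonneg_left hF (by positivity)
            · positivity
            · positivity
        _ = 4 * N / (1 + t ^ 2) := by
            rw [pow_succ]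
            field_simp
        _ ≤ 16 * N / (1 + t ^ 2) := by gcongr; nlinarith
    calc _ ≤ 16 * N / (1 + t ^ 2) + 16 * N / (1 + t ^ 2) := add_le_add hb1 hb2
      _ = 32 * N / (1 + t ^ 2) := by ring

/-! ### Main theorem -/

set_option maxHeartbeats 4000000 in
/-- The projection of the equation `ðð̄Ψ₀¹ + 5Ψ₀¹ = 10(Ψ₁⁰)² − 15Ψ₀⁰Ψ₂⁰` onto
the five `l = 2` harmonics: the Newman–Penrose integrals of `F = Ψ₀¹` equal
`1/3` of the integrals of the source; in particular they all vanish under the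
asymptotically algebraically special relation `2(Ψ₁⁰)² = 3Ψ₀⁰Ψ₂⁰`. -/
theorem NP_constants_from_source (C : ℂ) (p q : Polynomial ℂ)
    (hp : p.degree ≤ 2) (hq : q.degree ≤ 4)
    (F : ℂ → ℂ) (hF : ContDiff ℝ (⊤ : ℕ∞) F)
    (hbd : ∃ M : ℝ, ∀ z : ℂ, ‖(F z)‖ ≤ M)
    (hbd' : ∃ M : ℝ, ∀ z : ℂ, ‖(edthBar 2 F z)‖ ≤ M)
    (heq : ∀ z : ℂ, edth 1 (edthBar 2 F) z + 5 * F z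
      = (10 * (p.eval z) ^ 2 - 15 * C * q.eval z) / (1 + ‖z‖ ^ 2 : ℂ) ^ 2) :
    (∀ k : ℕ, k ≤ 4 →
      ∫ z : ℂ, (starRingEnd ℂ) (Ysph k z) * F z
          * (4 / (1 + ‖z‖ ^ 2 : ℂ) ^ 2)
        = (1 / 3 : ℂ) * ∫ z : ℂ, (starRingEnd ℂ) (Ysph k z)
            * ((10 * (p.eval z) ^ 2 - 15 * C * q.eval z)
                / (1 + ‖z‖ ^ 2 : ℂ) ^ 2)
            * (4 / (1 + ‖z‖ ^ 2 : ℂ) ^ 2)) ∧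
    ((∀ z : ℂ, 2 * (p.eval z) ^ 2 = 3 * C * q.eval z) →
      ∀ k : ℕ, k ≤ 4 →
        ∫ z : ℂ, (starRingEnd ℂ) (Ysph k z) * F z
          * (4 / (1 + ‖z‖ ^ 2 : ℂ) ^ 2) = 0) := by
  obtain ⟨M₁, hM₁⟩ := hbd
  obtain ⟨M₂, hM₂⟩ := hbd'
  have hN1 : ∀ z, ‖(F z)‖ ≤ max M₁ 0 := fun z => le_trans (hM₁ z) (le_max_left _ _)
  have hN10 : (0:ℝ) ≤ max M₁ 0 := le_max_right _ _
  -- bound for Gt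
  have hs2ne : ((Real.sqrt 2 : ℝ) : ℂ) ≠ 0 := by
    rw [Complex.ofReal_ne_zero]
    positivity
  have hs : ((Real.sqrt 2 : ℝ) : ℂ) * ((Real.sqrt 2 : ℝ) : ℂ) = 2 := by
    norm_cast
    exact Real.mul_self_sqrt (by norm_num)
  have hGtb : ∀ z, ‖(Gt F z)‖ ≤ 2 * max M₂ 0 := by
    intro z
    have h1 : Gt F z = ((Real.sqrt 2 : ℝ) : ℂ) * edthBar 2 F z := by
      rw [hGt hF z]
      field_simp
    rw [h1, norm_mul]
    have hsle : ‖((Real.sqrt 2 : ℝ) : ℂ)‖ ≤ 2 := by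
      rw [Complex.norm_of_nonneg (Real.sqrt_nonneg 2)]
      nlinarith [Real.sq_sqrt (show (0:ℝ) ≤ 2 by norm_num), Real.sqrt_nonneg 2]
    exact mul_le_mul hsle (le_trans (hM₂ z) (le_max_left _ _)) (norm_nonneg _)
      (by norm_num)
  have hGtb0 : (0:ℝ) ≤ 2 * max M₂ 0 := by positivity
  -- the key pointwise identity from heq
  have hkey : ∀ z : ℂ, (1/2 : ℂ) * (z * Gt F z + Wf z * bGt F z) + 5 * F z
      = (10 * (p.eval z) ^ 2 - 15 * C * q.eval z) / (Wf z) ^ 2 := by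
    intro z
    have hz := heq z
    rw [edth] at hz
    rw [show ((1:ℤ) - 1) = 0 from rfl, zpow_zero, mul_one] at hz
    have hfun : (fun w => (1 + (‖w‖) ^ 2 : ℂ) ^ (1:ℤ) * edthBar 2 F w)
        = fun w => Wf w * (((Real.sqrt 2 : ℝ) : ℂ)⁻¹ * Gt F w) := by
      funext w
      rw [zpow_one, wcast', hGt hF w]
    rw [hfun] at hz
    have hch := (hwW z).mul ((hw_const (((Real.sqrt 2 : ℝ) : ℂ)⁻¹) z).mul (hwGt hF z))
    have h2 := HW.wirtDBar_eq
      (f := fun w => Wf w * (((Real.sqrt 2 : ℝ) : ℂ)⁻¹ * Gt F w)) hch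
    rw [h2, wcast'] at hz
    have hinv : (((Real.sqrt 2 : ℝ)) : ℂ)⁻¹ = (((Real.sqrt 2 : ℝ)) : ℂ) / 2 := by
      rw [eq_div_iff (two_ne_zero), inv_mul_eq_iff_eq_mul₀ hs2ne]
      exact hs.symm
    rw [hinv] at hz
    linear_combination hz - ((Wf z * bGt F z + Gt F z * z) / 4) * hs
  -- main statement for each k
  have main : ∀ k : ℕ, k ≤ 4 →
      ∫ z : ℂ, (starRingEnd ℂ) (Ysph k z) * F z
          * (4 / (1 + (‖z‖) ^ 2 : ℂ) ^ 2)
        = (1 / 3 : ℂ) * ∫ z : ℂ, (starRingEnd ℂ) (Ysph k z)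
            * ((10 * (p.eval z) ^ 2 - 15 * C * q.eval z)
                / (1 + (‖z‖) ^ 2 : ℂ) ^ 2)
            * (4 / (1 + (‖z‖) ^ 2 : ℂ) ^ 2) := by
    intro k hk
    -- integrability of both integrands
    have hI1 : Integrable (fun z : ℂ => (starRingEnd ℂ) (Ysph k z) * F z
        * (4 / (1 + (‖z‖) ^ 2 : ℂ) ^ 2)) :=
      int_aux k hk F hF.continuous (max M₁ 0) hN1
    -- the source term
    set Src : ℂ → ℂ := fun z => (10 * (p.eval z) ^ 2 - 15 * C * q.eval z)
        / (1 + (‖z‖) ^ 2 : ℂ) ^ 2 with hSrcdef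
    have hSrcC : Continuous Src := by
      apply Continuous.div
      · exact (continuous_const.mul ((p.continuous).pow 2)).sub
          (continuous_const.mul (q.continuous))
      · exact (by continuity : Continuous fun z : ℂ => (1 + (‖z‖) ^ 2 : ℂ)).pow 2
      · exact fun z => pow_ne_zero 2 (wne z)
    obtain ⟨c₀, hc₀0, hc₀⟩ := poly_bound (Polynomial.C 10 * p ^ 2 - Polynomial.C (15 * C) * q)
      (by
        apply le_trans (Polynomial.natDegree_sub_le _ _)
        apply max_le
        · refine le_trans (Polynomial.natDegree_C_mul_le _ _) ?_
          rw [Polynomial.natDegree_pow]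
          have hp2 : p.natDegree ≤ 2 := Polynomial.natDegree_le_of_degree_le hp
          omega
        · refine le_trans (Polynomial.natDegree_C_mul_le _ _) ?_
          exact Polynomial.natDegree_le_of_degree_le hq)
    have hSrcB : ∀ z, ‖(Src z)‖ ≤ c₀ := by
      intro z
      have hSz : Src z = (Polynomial.C 10 * p ^ 2 - Polynomial.C (15 * C) * q).eval z
          / (1 + (‖z‖) ^ 2 : ℂ) ^ 2 := by
        rw [hSrcdef]
        simp [Polynomial.eval_mul, Polynomial.eval_pow]
      rw [hSz, norm_div, norm_pow, abs_w, div_le_iff₀ (by positivity)]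
      exact hc₀ z
    have hI2 : Integrable (fun z : ℂ => (starRingEnd ℂ) (Ysph k z) * Src z
        * (4 / (1 + (‖z‖) ^ 2 : ℂ) ^ 2)) :=
      int_aux k hk Src hSrcC c₀ hSrcB
    -- the function D and its divergence representation
    set D : ℂ → ℂ := fun z => (starRingEnd ℂ) (Ysph k z) * Src z
        * (4 / (1 + (‖z‖) ^ 2 : ℂ) ^ 2)
      - 3 * ((starRingEnd ℂ) (Ysph k z) * F z
        * (4 / (1 + (‖z‖) ^ 2 : ℂ) ^ 2)) with hDdef
    have hIntD : Integrable D := hI2.sub (hI1.const_mul 3)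
    -- divergence identity
    have hDiv : ∀ z : ℂ, fderiv ℝ (fun w => Af k F w - Bf k F w) z 1
        + fderiv ℝ (fun w => Complex.I * (Af k F w + Bf k F w)) z Complex.I = D z := by
      intro z
      have h1 : HW (fun w => Af k F w - Bf k F w)
          (aAf k F z - aBf k F z) (bAf k F z - bBf k F z) z :=
        (hwA hF k z).sub (hwB hF k z)
      have h2 := (hw_const Complex.I z).mul ((hwA hF k z).add (hwB hF k z))
      rw [HW.fderiv_eq h1, HW.fderiv_eq h2, wd_apply, wd_apply, map_one, Complex.conj_I]
      beta_reduce
      rw [Isum]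
      have hW4 : (Wf z) ^ 4 ≠ 0 := pow_ne_zero 4 (wfne z)
      calc 2 * bAf k F z - 2 * aBf k F z
          = (2 * ((k:ℂ) * ((starRingEnd ℂ) z) ^ (k-1) * (Wf z * Gt F z)
              + ((starRingEnd ℂ) z) ^ k * (Wf z * bGt F z - 3 * z * Gt F z))
            - 2 * ((k:ℂ) * ((starRingEnd ℂ) z) ^ (k-1)
                * ((Wf z) ^ 2 * wirtD F z - 2 * (starRingEnd ℂ) z * (Wf z * F z))
              - 4 * (((starRingEnd ℂ) z) ^ k * (Wf z * F z)
                + z * (((starRingEnd ℂ) z) ^ k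
                  * (Wf z * wirtD F z - 3 * (starRingEnd ℂ) z * F z))))) / (Wf z) ^ 4 := by
            unfold bAf aBf
            rw [eq_div_iff hW4]
            have hc2 : ((Wf z)^2)⁻¹ * (Wf z)^4 = (Wf z)^2 := by
              field_simp [wfne z]
            have hc3 : ((Wf z)^3)⁻¹ * (Wf z)^4 = Wf z := by
              field_simp [wfne z]
            have hc4 : ((Wf z)^4)⁻¹ * (Wf z)^4 = 1 := inv_mul_cancel₀ hW4
            linear_combination (2*(k:ℂ)*((starRingEnd ℂ) z)^(k-1)*Gt F z
                + 2*((starRingEnd ℂ) z)^k*bGt F z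
                + 4*(k:ℂ)*((starRingEnd ℂ) z)^(k-1)*(starRingEnd ℂ) z*F z
                + 8*((starRingEnd ℂ) z)^k*F z + 8*z*((starRingEnd ℂ) z)^k*wirtD F z) * hc3
              + (-6*z*((starRingEnd ℂ) z)^k*Gt F z
                 - 24*z*((starRingEnd ℂ) z)^k*(starRingEnd ℂ) z*F z) * hc4
              + (-2*(k:ℂ)*((starRingEnd ℂ) z)^(k-1)*wirtD F z) * hc2
        _ = D z := by
            simp only [hDdef, hSrcdef]
            rw [hYconj k z, wcast' z, ← hkey z]
            rw [div_eq_iff hW4]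
            field_simp [wfne z]
            unfold Gt bGt
            rw [show Wf z = 1 + z * (starRingEnd ℂ) z from rfl]
            ring
    -- differentiability
    have hdf : Differentiable ℝ (fun w => Af k F w - Bf k F w) :=
      fun z => ((hwA hF k z).sub (hwB hF k z)).differentiableAt
    have hdg : Differentiable ℝ (fun w => Complex.I * (Af k F w + Bf k F w)) :=
      fun z => ((hw_const Complex.I z).mul ((hwA hF k z).add (hwB hF k z))).differentiableAt
    -- boundary bounds
    have hKf : ∀ z, ‖Af k F z - Bf k F z‖
        ≤ (2 * max M₂ 0 + 32 * max M₁ 0) / (1 + ‖z‖ ^ 2) := by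
      intro z
      refine le_trans (norm_sub_le _ _) ?_
      rw [add_div]
      exact add_le_add (Af_bound k hk (2 * max M₂ 0) hGtb z) (Bf_bound k hk (max M₁ 0) hN1 z)
    have hKg : ∀ z, ‖Complex.I * (Af k F z + Bf k F z)‖
        ≤ (2 * max M₂ 0 + 32 * max M₁ 0) / (1 + ‖z‖ ^ 2) := by
      intro z
      rw [norm_mul, Complex.norm_I, one_mul]
      refine le_trans (norm_add_le _ _) ?_
      rw [add_div]
      exact add_le_add (Af_bound k hk (2 * max M₂ 0) hGtb z) (Bf_bound k hk (max M₁ 0) hN1 z)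
    have hzero : ∫ z, D z = 0 :=
      div_int_zero _ _ D hdf hdg hDiv hIntD (2 * max M₂ 0 + 32 * max M₁ 0)
        (by positivity) hKf hKg
    rw [hDdef] at hzero
    rw [integral_sub hI2 (hI1.const_mul 3), integral_const_mul] at hzero
    linear_combination (-1/3 : ℂ) * hzero
  refine ⟨main, ?_⟩
  intro hrel k hk
  have h := main k hk
  have hzero2 : ∀ z : ℂ, (starRingEnd ℂ) (Ysph k z)
      * ((10 * (p.eval z) ^ 2 - 15 * C * q.eval z) / (1 + (‖z‖) ^ 2 : ℂ) ^ 2)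
      * (4 / (1 + (‖z‖) ^ 2 : ℂ) ^ 2) = 0 := by
    intro z
    have h5 : 10 * (p.eval z) ^ 2 - 15 * C * q.eval z = 0 := by
      linear_combination 5 * hrel z
    rw [h5, zero_div, mul_zero, zero_mul]
  rw [h]
  simp only [hzero2]
  simp
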